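/- arXiv:2012.11092 — 2 statements merged into one kernel-verified Lean document; each statement's English description precedes it below -/
import Mathlib

section
/- Let A be the infinitesimal generator of a strongly continuous semigroup (T_t)_{t≥0} on a real Banach space X, and let μ(A) = sup_{v ∈ D(A), v ≠ 0} [Av, v]/‖v‖² be the logarithmic norm of A, assumed finite. Then for all t ≥ 0 and all x ∈ D(A), ‖T_t x‖ ≤ exp(t·μ(A))·‖x‖. -/
/-!
The difference quotients of the convex function `h ↦ ‖y + h • u‖` increase in `h > 0`, so the
limit in `sip u y` exists and equals `‖y‖` times their infimum. If `x` lies in the domain of `A`,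
so does `y = T s x`, and the right upper Dini derivative of `s ↦ ‖T s x‖` is at most
`sip (A y) y / ‖y‖ ≤ μ ‖y‖`. Gronwall's inequality turns this into `‖T t x‖ ≤ exp (t μ) ‖x‖`;
the continuity of the orbit that it needs comes from local uniform boundedness of `T`
(Banach–Steinhaus).
-/

open Filter Topology

/-- Right defined semi-inner-product. -/
noncomputable def sip {X : Type*} [NormedAddCommGroup X] [NormedSpace ℝ X] (u v : X) : ℝ :=
  (limUnder (𝓝[>] (0 : ℝ)) fun ε : ℝ => (‖v + ε • u‖ - ‖v‖) / ε) * ‖v‖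

open Set

section NormSlope

variable {X : Type*} [NormedAddCommGroup X] [NormedSpace ℝ X]

theorem monotoneOn_norm_add_smul_slope (y u : X) :
    MonotoneOn (fun h : ℝ => (‖y + h • u‖ - ‖y‖) / h) (Ioi 0) := by
  have hconv : ConvexOn ℝ univ (norm ∘ AffineMap.lineMap (k := ℝ) y (y + u)) :=
    (convexOn_norm convex_univ).comp_affineMap _
  intro h (hh : 0 < h) k (hk : 0 < k) hhk
  simpa [AffineMap.lineMap_apply, add_comm y] using
    hconv.secant_mono (a := 0) trivial trivial trivial hh.ne' hk.ne' hhk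

theorem bddBelow_norm_add_smul_slope (y u : X) :
    BddBelow ((fun h : ℝ => (‖y + h • u‖ - ‖y‖) / h) '' Ioi 0) := by
  refine ⟨-‖u‖, ?_⟩
  rintro _ ⟨h, hh : 0 < h, rfl⟩
  rw [le_div_iff₀ hh, neg_mul, neg_le_sub_iff_le_add]
  simpa [norm_smul, abs_of_pos hh, mul_comm] using norm_le_insert' y (y + h • u)

theorem tendsto_norm_add_smul_slope_sip {y : X} (hy : y ≠ 0) (u : X) :
    Tendsto (fun h : ℝ => (‖y + h • u‖ - ‖y‖) / h) (𝓝[>] 0) (𝓝 (sip u y / ‖y‖)) := by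
  have hlim := (monotoneOn_norm_add_smul_slope y u).tendsto_nhdsGT
    (bddBelow_norm_add_smul_slope y u)
  rwa [sip, hlim.limUnder_eq, mul_div_cancel_right₀ _ (norm_ne_zero_iff.2 hy)]

theorem inv_mul_norm_sub_norm_le {h : ℝ} (hh : 0 < h) (w y u : X) :
    h⁻¹ * (‖w‖ - ‖y‖) ≤ (‖y + h • u‖ - ‖y‖) / h + ‖h⁻¹ • (w - y) - u‖ := by
  have hw : ‖w‖ ≤ ‖y + h • u‖ + h * ‖h⁻¹ • (w - y) - u‖ := by
    have : w - (y + h • u) = h • (h⁻¹ • (w - y) - u) := by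
      rw [smul_sub, smul_inv_smul₀ hh.ne']; abel
    simpa [this, norm_smul, abs_of_pos hh] using norm_le_insert' w (y + h • u)
  calc h⁻¹ * (‖w‖ - ‖y‖) ≤ h⁻¹ * (‖y + h • u‖ + h * ‖h⁻¹ • (w - y) - u‖ - ‖y‖) := by gcongr
    _ = (‖y + h • u‖ - ‖y‖) / h + ‖h⁻¹ • (w - y) - u‖ := by field_simp; ring

theorem eventually_inv_mul_norm_sub_lt {g : ℝ → X} {y u : X} {L r : ℝ}
    (hg : Tendsto (fun h : ℝ => h⁻¹ • (g h - y)) (𝓝[>] 0) (𝓝 u))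
    (hL : Tendsto (fun h : ℝ => (‖y + h • u‖ - ‖y‖) / h) (𝓝[>] 0) (𝓝 L)) (hr : L < r) :
    ∀ᶠ h in 𝓝[>] 0, h⁻¹ * (‖g h‖ - ‖y‖) < r := by
  have herr : Tendsto (fun h : ℝ => ‖h⁻¹ • (g h - y) - u‖) (𝓝[>] 0) (𝓝 0) :=
    tendsto_iff_norm_sub_tendsto_zero.1 hg
  filter_upwards [(hL.add herr).eventually_lt_const (by rwa [add_zero]), self_mem_nhdsWithin]
    with h hlt hh
  exact (inv_mul_norm_sub_norm_le hh _ y u).trans_lt hlt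

end NormSlope

section Semigroup

variable {X : Type*} [NormedAddCommGroup X] [NormedSpace ℝ X] {T : ℝ → X →L[ℝ] X}

theorem semigroup_apply_comm (hTsem : ∀ s t : ℝ, 0 ≤ s → 0 ≤ t → T (s + t) = T s ∘L T t)
    {s t : ℝ} (hs : 0 ≤ s) (ht : 0 ≤ t) (x : X) : T s (T t x) = T t (T s x) := by
  rw [← ContinuousLinearMap.comp_apply, ← hTsem s t hs ht, add_comm, hTsem t s ht hs,
    ContinuousLinearMap.comp_apply]

theorem tendsto_semigroup_nhdsGE (hT0 : T 0 = 1)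
    (hTcont : ∀ x : X, Tendsto (fun t => T t x) (𝓝[>] (0 : ℝ)) (𝓝 x)) (x : X) :
    Tendsto (fun t => T t x) (𝓝[≥] 0) (𝓝 x) := by
  have : ContinuousWithinAt (fun t => T t x) (Ioi 0) 0 := by
    simpa [ContinuousWithinAt, hT0] using hTcont x
  simpa [ContinuousWithinAt, hT0] using continuousWithinAt_Ioi_iff_Ici.1 this

theorem norm_semigroup_le_pow_mul (hTsem : ∀ s t : ℝ, 0 ≤ s → 0 ≤ t → T (s + t) = T s ∘L T t)
    {z : X} {δ c : ℝ} (hδ : 0 < δ) (hc : ∀ s ∈ Ico 0 δ, ‖T s z‖ ≤ c) :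
    ∀ n : ℕ, ∀ s ∈ Ico 0 (n * δ), ‖T s z‖ ≤ max 1 ‖T δ‖ ^ n * c := by
  intro n
  induction n with
  | zero => simp
  | succ n ih =>
    rintro s ⟨hs0, hsn⟩
    have hc0 : 0 ≤ c := (norm_nonneg _).trans (hc 0 ⟨le_rfl, hδ⟩)
    rcases lt_or_ge s δ with hsδ | hδs
    · calc ‖T s z‖ ≤ c := hc s ⟨hs0, hsδ⟩
        _ ≤ max 1 ‖T δ‖ ^ (n + 1) * c :=
          le_mul_of_one_le_left hc0 (one_le_pow₀ (le_max_left _ _))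
    · have hsplit : T s z = T δ (T (s - δ) z) := by
        rw [← ContinuousLinearMap.comp_apply, ← hTsem δ (s - δ) hδ.le (by linarith),
          add_sub_cancel]
      calc ‖T s z‖ ≤ ‖T δ‖ * ‖T (s - δ) z‖ := hsplit ▸ (T δ).le_opNorm _
        _ ≤ max 1 ‖T δ‖ * (max 1 ‖T δ‖ ^ n * c) := by
          gcongr
          · exact le_max_right _ _
          · exact ih _ ⟨by linarith, by push_cast at hsn; linarith⟩
        _ = max 1 ‖T δ‖ ^ (n + 1) * c := by ring

theorem exists_norm_semigroup_apply_le (hT0 : T 0 = 1)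
    (hTsem : ∀ s t : ℝ, 0 ≤ s → 0 ≤ t → T (s + t) = T s ∘L T t)
    (hTcont : ∀ x : X, Tendsto (fun t => T t x) (𝓝[>] (0 : ℝ)) (𝓝 x)) (z : X) (t : ℝ) :
    ∃ M, ∀ s ∈ Icc 0 t, ‖T s z‖ ≤ M := by
  have hnear : ∀ᶠ s in 𝓝[≥] 0, ‖T s z‖ ≤ ‖z‖ + 1 := by
    filter_upwards [tendsto_semigroup_nhdsGE hT0 hTcont z (Metric.ball_mem_nhds z one_pos)]
      with s hs
    have := norm_le_insert' (T s z) z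
    rw [mem_preimage, mem_ball_iff_norm] at hs
    linarith
  obtain ⟨δ, hδ, hδc⟩ := mem_nhdsGE_iff_exists_Ico_subset.1 hnear
  obtain ⟨n, hn⟩ := exists_lt_nsmul hδ t
  exact ⟨_, fun s hs => norm_semigroup_le_pow_mul hTsem hδ hδc n s
    ⟨hs.1, hs.2.trans_lt (by rwa [← nsmul_eq_mul])⟩⟩

theorem exists_norm_semigroup_le [CompleteSpace X] (hT0 : T 0 = 1)
    (hTsem : ∀ s t : ℝ, 0 ≤ s → 0 ≤ t → T (s + t) = T s ∘L T t)
    (hTcont : ∀ x : X, Tendsto (fun t => T t x) (𝓝[>] (0 : ℝ)) (𝓝 x)) (t : ℝ) :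
    ∃ C, ∀ s ∈ Icc 0 t, ‖T s‖ ≤ C := by
  obtain ⟨C, hC⟩ := banach_steinhaus (g := fun s : Icc 0 t => T s) fun z =>
    (exists_norm_semigroup_apply_le hT0 hTsem hTcont z t).imp fun M hM s => hM s s.2
  exact ⟨C, fun s hs => hC ⟨s, hs⟩⟩

theorem norm_semigroup_sub_le (hTsem : ∀ s t : ℝ, 0 ≤ s → 0 ≤ t → T (s + t) = T s ∘L T t)
    {t C : ℝ} (hC : ∀ s ∈ Icc 0 t, ‖T s‖ ≤ C) {r s : ℝ} (hr : r ∈ Icc 0 t) (hs : s ∈ Icc 0 t)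
    (x : X) : ‖T r x - T s x‖ ≤ C * ‖T |r - s| x - x‖ := by
  wlog hsr : s ≤ r generalizing r s
  · rw [norm_sub_rev, abs_sub_comm]
    exact this hs hr (by linarith)
  have hsplit : T r x = T s (T (r - s) x) := by
    rw [← ContinuousLinearMap.comp_apply, ← hTsem s (r - s) hs.1 (by linarith), add_sub_cancel]
  calc ‖T r x - T s x‖ = ‖T s (T (r - s) x - x)‖ := by rw [map_sub, hsplit]
    _ ≤ C * ‖T |r - s| x - x‖ := by
      rw [abs_of_nonneg (sub_nonneg.2 hsr)]
      exact (T s).le_of_opNorm_le (hC s hs) _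

theorem continuousOn_semigroup [CompleteSpace X] (hT0 : T 0 = 1)
    (hTsem : ∀ s t : ℝ, 0 ≤ s → 0 ≤ t → T (s + t) = T s ∘L T t)
    (hTcont : ∀ x : X, Tendsto (fun t => T t x) (𝓝[>] (0 : ℝ)) (𝓝 x)) (x : X) (t : ℝ) :
    ContinuousOn (fun s => T s x) (Icc 0 t) := by
  obtain ⟨C, hC⟩ := exists_norm_semigroup_le hT0 hTsem hTcont t
  intro s hs
  have hdist : Tendsto (fun r => |r - s|) (𝓝[Icc 0 t] s) (𝓝[≥] 0) :=
    tendsto_nhdsWithin_iff.2 ⟨tendsto_nhdsWithin_of_tendsto_nhds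
      (by simpa using ((continuous_sub_right s).abs.tendsto s)),
      .of_forall fun r => abs_nonneg (r - s)⟩
  have hsmall : Tendsto (fun r => C * ‖T |r - s| x - x‖) (𝓝[Icc 0 t] s) (𝓝 0) := by
    simpa using ((tendsto_iff_norm_sub_tendsto_zero.1
      (tendsto_semigroup_nhdsGE hT0 hTcont x)).comp hdist).const_mul C
  refine tendsto_iff_norm_sub_tendsto_zero.2 (squeeze_zero' (.of_forall fun _ => norm_nonneg _)
    ?_ hsmall)
  filter_upwards [self_mem_nhdsWithin] with r hr
  exact norm_semigroup_sub_le hTsem hC hr hs x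

theorem tendsto_generator_semigroup_apply
    (hTsem : ∀ s t : ℝ, 0 ≤ s → 0 ≤ t → T (s + t) = T s ∘L T t) {x u : X}
    (hx : Tendsto (fun h : ℝ => h⁻¹ • (T h x - x)) (𝓝[>] 0) (𝓝 u)) {s : ℝ} (hs : 0 ≤ s) :
    Tendsto (fun h : ℝ => h⁻¹ • (T h (T s x) - T s x)) (𝓝[>] 0) (𝓝 (T s u)) := by
  refine (((T s).continuous.tendsto u).comp hx).congr' ?_
  filter_upwards [self_mem_nhdsWithin] with h (hh : 0 < h)
  simp [semigroup_apply_comm hTsem hh.le hs]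

theorem eventually_slope_norm_semigroup_lt
    (hTsem : ∀ s t : ℝ, 0 ≤ s → 0 ≤ t → T (s + t) = T s ∘L T t)
    {domA : Set X} {A : X → X}
    (hdom : ∀ x : X, x ∈ domA ↔ ∃ y : X,
      Tendsto (fun h : ℝ => h⁻¹ • (T h x - x)) (𝓝[>] (0 : ℝ)) (𝓝 y))
    (hA : ∀ x ∈ domA,
      Tendsto (fun h : ℝ => h⁻¹ • (T h x - x)) (𝓝[>] (0 : ℝ)) (𝓝 (A x)))
    {μ : ℝ} (hμ : ∀ v ∈ domA, v ≠ 0 → sip (A v) v / ‖v‖ ^ 2 ≤ μ)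
    {x : X} (hx : x ∈ domA) {s r : ℝ} (hs : 0 ≤ s) (hr : μ * ‖T s x‖ < r) :
    ∀ᶠ h in 𝓝[>] 0, h⁻¹ * (‖T h (T s x)‖ - ‖T s x‖) < r := by
  set y := T s x
  rcases eq_or_ne y 0 with hy | hy
  · simp only [hy, map_zero, norm_zero, mul_zero, sub_zero] at hr ⊢
    exact .of_forall fun _ => hr
  have hyA : y ∈ domA := (hdom y).2 ⟨_, tendsto_generator_semigroup_apply hTsem (hA x hx) hs⟩
  have hsip : sip (A y) y / ‖y‖ ≤ μ * ‖y‖ := by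
    have hy' : 0 < ‖y‖ := norm_pos_iff.2 hy
    calc sip (A y) y / ‖y‖ = sip (A y) y / ‖y‖ ^ 2 * ‖y‖ := by field_simp
      _ ≤ μ * ‖y‖ := by gcongr; exact hμ y hyA hy
  exact eventually_inv_mul_norm_sub_lt (hA y hyA) (tendsto_norm_add_smul_slope_sip hy _)
    (hsip.trans_lt hr)

end Semigroup

theorem semigroup_log_norm_bound {X : Type*} [NormedAddCommGroup X] [NormedSpace ℝ X]
    [CompleteSpace X]
    (T : ℝ → X →L[ℝ] X)
    (hT0 : T 0 = 1)
    (hTsem : ∀ s t : ℝ, 0 ≤ s → 0 ≤ t → T (s + t) = T s ∘L T t)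
    (hTcont : ∀ x : X, Tendsto (fun t => T t x) (𝓝[>] (0 : ℝ)) (𝓝 x))
    (domA : Set X) (A : X → X)
    (hdom : ∀ x : X, x ∈ domA ↔ ∃ y : X,
      Tendsto (fun h : ℝ => h⁻¹ • (T h x - x)) (𝓝[>] (0 : ℝ)) (𝓝 y))
    (hA : ∀ x ∈ domA,
      Tendsto (fun h : ℝ => h⁻¹ • (T h x - x)) (𝓝[>] (0 : ℝ)) (𝓝 (A x)))
    (μ : ℝ)
    (hμ : IsLUB {r : ℝ | ∃ v ∈ domA, v ≠ 0 ∧ r = sip (A v) v / ‖v‖ ^ 2} μ) :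
    ∀ t : ℝ, 0 ≤ t → ∀ x ∈ domA, ‖T t x‖ ≤ Real.exp (t * μ) * ‖x‖ := by
  intro t ht x hx
  have hμ' : ∀ v ∈ domA, v ≠ 0 → sip (A v) v / ‖v‖ ^ 2 ≤ μ := fun v hv hv0 =>
    hμ.1 ⟨v, hv, hv0, rfl⟩
  have hslope : ∀ s ∈ Ico 0 t, ∀ r, μ * ‖T s x‖ < r →
      ∃ᶠ z in 𝓝[>] s, (z - s)⁻¹ * (‖T z x‖ - ‖T s x‖) < r := by
    intro s hs r hr
    refine Eventually.frequently ?_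
    rw [← add_zero s, ← map_add_left_nhdsGT, eventually_map]
    filter_upwards [eventually_slope_norm_semigroup_lt hTsem hdom hA hμ' hx hs.1 hr,
      self_mem_nhdsWithin] with h hlt (hh : 0 < h)
    rwa [add_zero, add_sub_cancel_left, add_comm, hTsem h s hh.le hs.1]
  have hgronwall := le_gronwallBound_of_liminf_deriv_right_le (δ := ‖x‖) (K := μ) (ε := 0)
    (continuous_norm.comp_continuousOn (continuousOn_semigroup hT0 hTsem hTcont x t)) hslope
    (by simp [hT0]) (fun _ _ => le_of_eq (add_zero _).symm) t ⟨ht, le_rfl⟩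
  simpa [gronwallBound_ε0, mul_comm] using hgronwall
end

section
/- Let α ∈ (0,1) and β ∈ (0,1] with β ≥ α. Then E_{α,β}(w) ≤ 1/Γ(β) for all w ≤ 0, and in particular E_{α,1}(w) ≤ 1 for all w ≤ 0. -/
/-- Real two-parameter Mittag-Leffler function. -/
noncomputable def mittagLefflerR (α β w : ℝ) : ℝ :=
  ∑' k : ℕ, w ^ k / Real.Gamma (β + α * k)

/-!
Since `E_{α,β}(w) = 1/Γ(β) + w E_{α,β+α}(w)`, it suffices that `E_{α,β+α} ≥ 0` on `(-∞, 0]`.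
Integrating termwise against the Beta kernel gives the Riemann–Liouville identity
`∫₀ᵗ (t-s)^(α-1) s^(β-1) E_{α,β}(-s^α) ds = Γ(α) t^(α+β-1) E_{α,β+α}(-t^α)`,
so it suffices that `E_{α,β} ≥ 0` on `(-∞, 0]`. Together with the first identity it says that
`σ(t) = E_{α,β}(-t^α)` solves the Volterra equation
`σ(t) = 1/Γ(β) - Γ(α)⁻¹ ∫₀ᵗ K(t,s) σ(s) ds` with `K(t,s) = t^(1-β) (t-s)^(α-1) s^(β-1)`,
and for `α ≤ β ≤ 1` this kernel is nonincreasing in `t`. If `σ` turned negative, compare the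
equation at a minimum point `t₁` shortly after the first sign change with the last point `s₁ < t₁`
where `σ ≥ 0`: monotonicity of `K` gives `σ(t₁) ≥ σ(t₁) Γ(α)⁻¹ ∫_{s₁}^{t₁} K(t₁,s) ds`, while the
kernel mass of a short window is less than `Γ(α)`, a contradiction.
-/

open Real MeasureTheory Set Filter

lemma rpow_mul_Gamma_le_Gamma_add {α y : ℝ} (hα₀ : 0 < α) (hα₁ : α < 1) (hy : 1 - α < y) :
    (y + α - 1) ^ α * Gamma y ≤ Gamma (y + α) := by
  have hz : 0 < y + α - 1 := by linarith
  have hΓ : 0 < Gamma (y + α) := Gamma_pos_of_pos (by linarith)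
  -- `y` is the `(1 - α, α)`-combination of `y + α` and `y + α - 1`; `Γ` is log-convex
  have hconv := Gamma_mul_add_mul_le_rpow_Gamma_mul_rpow_Gamma (a := 1 - α) (b := α)
    (by linarith : 0 < y + α) hz (by linarith) hα₀ (by ring)
  have hrec : Gamma (y + α - 1) = Gamma (y + α) / (y + α - 1) := by
    rw [eq_div_iff hz.ne', mul_comm, ← Gamma_add_one hz.ne', sub_add_cancel]
  rw [show (1 - α) * (y + α) + α * (y + α - 1) = y by ring, hrec,
    div_rpow hΓ.le hz.le, mul_div, ← rpow_add hΓ, sub_add_cancel, rpow_one,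
    le_div_iff₀ (rpow_pos_of_pos hz α)] at hconv
  linarith

lemma summable_pow_div_Gamma {α β : ℝ} (hα₀ : 0 < α) (hα₁ : α < 1) (hβ : 0 < β) (x : ℝ) :
    Summable (fun k : ℕ => x ^ k / Gamma (β + α * k)) := by
  have hlin : Tendsto (fun k : ℕ => β + α * k + α - 1) atTop atTop :=
    tendsto_atTop_add_const_right _ _ (tendsto_atTop_add_const_right _ _
      (tendsto_atTop_add_const_left _ _
        ((tendsto_natCast_atTop_atTop (R := ℝ)).const_mul_atTop hα₀)))
  have hev : ∀ᶠ k : ℕ in atTop, 1 ≤ β + α * k + α - 1 ∧ 2 * |x| ≤ (β + α * k + α - 1) ^ α :=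
    (hlin.eventually_ge_atTop 1).and (((tendsto_rpow_atTop hα₀).comp hlin).eventually_ge_atTop _)
  refine summable_of_ratio_norm_eventually_le (r := 1 / 2) (by norm_num) ?_
  filter_upwards [hev] with k ⟨hk₁, hk₂⟩
  set y := β + α * k
  have hy : 0 < Gamma y := Gamma_pos_of_pos (by positivity)
  have hyα : 0 < Gamma (y + α) := Gamma_pos_of_pos (by positivity)
  have hratio : 2 * |x| * Gamma y ≤ Gamma (y + α) :=
    (mul_le_mul_of_nonneg_right hk₂ hy.le).trans (rpow_mul_Gamma_le_Gamma_add hα₀ hα₁ (by linarith))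
  rw [show β + α * ((k + 1 : ℕ) : ℝ) = y + α by push_cast; ring, norm_div, norm_div, norm_pow,
    norm_pow, norm_of_nonneg hy.le, norm_of_nonneg hyα.le, Real.norm_eq_abs, div_le_iff₀ hyα,
    pow_succ]
  calc |x| ^ k * |x| = 1 / 2 * (|x| ^ k / Gamma y) * (2 * |x| * Gamma y) := by field_simp
    _ ≤ 1 / 2 * (|x| ^ k / Gamma y) * Gamma (y + α) := by gcongr

lemma mittagLefflerR_zero (α β : ℝ) : mittagLefflerR α β 0 = 1 / Gamma β := by
  rw [mittagLefflerR, tsum_eq_single 0 fun k hk => by simp [zero_pow hk]]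
  simp

lemma mittagLefflerR_eq_add_mul {α β : ℝ} (hα₀ : 0 < α) (hα₁ : α < 1) (hβ : 0 < β) (w : ℝ) :
    mittagLefflerR α β w = 1 / Gamma β + w * mittagLefflerR α (β + α) w := by
  rw [mittagLefflerR, (summable_pow_div_Gamma hα₀ hα₁ hβ w).tsum_eq_zero_add, mittagLefflerR,
    ← tsum_mul_left]
  congr 1
  · simp
  · congr 1 with k
    rw [show β + α * ((k + 1 : ℕ) : ℝ) = β + α + α * k by push_cast; ring, pow_succ]
    ring

lemma continuous_mittagLefflerR {α β : ℝ} (hα₀ : 0 < α) (hα₁ : α < 1) (hβ : 0 < β) :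
    Continuous (mittagLefflerR α β) := by
  refine continuous_iff_continuousAt.2 fun x => ?_
  set R := |x| + 1
  have hcont : ContinuousOn (mittagLefflerR α β) (Icc (-R) R) := by
    refine continuousOn_tsum (fun k => (continuousOn_pow k).div_const _)
      (summable_pow_div_Gamma hα₀ hα₁ hβ R) fun k w hw => ?_
    rw [norm_div, norm_pow, norm_of_nonneg (Gamma_pos_of_pos (by positivity)).le]
    gcongr
    exact abs_le.2 hw
  exact hcont.continuousAt (Icc_mem_nhds (by linarith [neg_abs_le x]) (by linarith [le_abs_self x]))

lemma integral_sub_rpow_mul_rpow {a b t : ℝ} (ha : 0 < a) (hb : 0 < b) (ht : 0 < t) :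
    ∫ s in Ioo 0 t, (t - s) ^ (a - 1) * s ^ (b - 1) =
      Gamma a * Gamma b / Gamma (a + b) * t ^ (a + b - 1) := by
  have hcast : ((∫ s in (0 : ℝ)..t, (t - s) ^ (a - 1) * s ^ (b - 1) : ℝ) : ℂ) =
      ∫ s in (0 : ℝ)..t, (s : ℂ) ^ ((b : ℂ) - 1) * ((t : ℂ) - s) ^ ((a : ℂ) - 1) := by
    rw [← intervalIntegral.integral_ofReal]
    refine intervalIntegral.integral_congr fun s hs => ?_
    rw [uIcc_of_le ht.le] at hs
    simp only [Complex.ofReal_mul, Complex.ofReal_cpow hs.1,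
      Complex.ofReal_cpow (sub_nonneg.2 hs.2), Complex.ofReal_sub, Complex.ofReal_one, mul_comm]
  have hbeta := Complex.Gamma_mul_Gamma_eq_betaIntegral (s := (b : ℂ)) (t := (a : ℂ))
    (by simpa using hb) (by simpa using ha)
  rw [Complex.betaIntegral_scaled _ _ ht] at hcast
  have key : (∫ s in (0 : ℝ)..t, (t - s) ^ (a - 1) * s ^ (b - 1)) * Gamma (b + a) =
      t ^ (b + a - 1) * (Gamma b * Gamma a) := by
    have := congrArg (· * Complex.Gamma ((b : ℂ) + a)) hcast
    rw [mul_assoc, mul_comm (Complex.betaIntegral _ _), ← hbeta, ← Complex.ofReal_add,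
      ← Complex.ofReal_one, ← Complex.ofReal_sub, ← Complex.ofReal_cpow ht.le] at this
    simp only [Complex.Gamma_ofReal] at this
    exact_mod_cast this
  have hΓ : 0 < Gamma (a + b) := Gamma_pos_of_pos (by linarith)
  rw [← integral_Ioc_eq_integral_Ioo, ← intervalIntegral.integral_of_le ht.le,
    eq_comm, div_mul_eq_mul_div, div_eq_iff hΓ.ne', add_comm a b, key]
  ring

lemma integrableOn_sub_rpow_mul_rpow {a b t : ℝ} (ha : 0 < a) (hb : 0 < b) (ht : 0 < t) :
    IntegrableOn (fun s => (t - s) ^ (a - 1) * s ^ (b - 1)) (Ioo 0 t) := by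
  refine Integrable.of_integral_ne_zero ?_
  rw [integral_sub_rpow_mul_rpow ha hb ht]
  have := Gamma_pos_of_pos ha
  have := Gamma_pos_of_pos hb
  have := Gamma_pos_of_pos (add_pos ha hb)
  positivity

section RiemannLiouville

variable {α β t : ℝ}

lemma eqOn_sub_rpow_mul_rpow_mul_pow (c : ℝ) (k : ℕ) :
    EqOn (fun s => (t - s) ^ (α - 1) * s ^ (β - 1) * (c * s ^ α) ^ k)
      (fun s => c ^ k * ((t - s) ^ (α - 1) * s ^ (β + α * k - 1))) (Ioo 0 t) := by
  intro s hs
  simp only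
  rw [mul_pow, ← rpow_natCast (s ^ α), ← rpow_mul hs.1.le,
    show β + α * k - 1 = β - 1 + α * k by ring, rpow_add hs.1]
  ring

lemma integral_sub_rpow_mul_rpow_mul_pow (hα : 0 < α) (hβ : 0 < β) (ht : 0 < t) (c : ℝ) (k : ℕ) :
    ∫ s in Ioo 0 t, (t - s) ^ (α - 1) * s ^ (β - 1) * (c * s ^ α) ^ k =
      Gamma α * Gamma (β + α * k) / Gamma (β + α + α * k) * t ^ (α + β - 1) * (c * t ^ α) ^ k := by
  rw [setIntegral_congr_fun measurableSet_Ioo (eqOn_sub_rpow_mul_rpow_mul_pow c k),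
    integral_const_mul, integral_sub_rpow_mul_rpow hα (by positivity) ht, mul_pow,
    ← rpow_natCast (t ^ α), ← rpow_mul ht.le, show α + (β + α * k) = β + α + α * k by ring,
    show β + α + α * k - 1 = α + β - 1 + α * k by ring, rpow_add ht]
  ring

lemma integrableOn_sub_rpow_mul_rpow_mul_pow (hα : 0 < α) (hβ : 0 < β) (ht : 0 < t) (c : ℝ)
    (k : ℕ) : IntegrableOn (fun s => (t - s) ^ (α - 1) * s ^ (β - 1) * (c * s ^ α) ^ k) (Ioo 0 t) :=
  IntegrableOn.congr_fun ((integrableOn_sub_rpow_mul_rpow hα (by positivity) ht).const_mul (c ^ k))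
    (eqOn_sub_rpow_mul_rpow_mul_pow c k).symm measurableSet_Ioo

lemma integral_sub_rpow_mul_rpow_mul_mittagLefflerR (hα₀ : 0 < α) (hα₁ : α < 1) (hβ : 0 < β)
    (ht : 0 < t) (c : ℝ) :
    ∫ s in Ioo 0 t, (t - s) ^ (α - 1) * s ^ (β - 1) * mittagLefflerR α β (c * s ^ α) =
      Gamma α * t ^ (α + β - 1) * mittagLefflerR α (β + α) (c * t ^ α) := by
  set F : ℝ → ℕ → ℝ → ℝ := fun a k s =>
    (t - s) ^ (α - 1) * s ^ (β - 1) * (a * s ^ α) ^ k / Gamma (β + α * k)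
  have hF : ∀ a k, ∫ s in Ioo 0 t, F a k s =
      Gamma α * t ^ (α + β - 1) * ((a * t ^ α) ^ k / Gamma (β + α + α * k)) := fun a k => by
    have : Gamma (β + α * k) ≠ 0 := (Gamma_pos_of_pos (by positivity)).ne'
    simp only [F, div_eq_mul_inv]
    rw [integral_mul_const, integral_sub_rpow_mul_rpow_mul_pow hα₀ hβ ht]
    field_simp
  have hnorm : ∀ k, EqOn (fun s => ‖F c k s‖) (F |c| k) (Ioo 0 t) := fun k s hs => by
    have : 0 < Gamma (β + α * k) := Gamma_pos_of_pos (by positivity)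
    simp only [F, norm_div, norm_mul, norm_pow, norm_of_nonneg this.le,
      norm_of_nonneg (rpow_nonneg (sub_nonneg.2 hs.2.le) _), norm_of_nonneg (rpow_nonneg hs.1.le _),
      Real.norm_eq_abs c]
  have hsum : Summable fun k => ∫ s in Ioo 0 t, ‖F c k s‖ := by
    simp only [setIntegral_congr_fun measurableSet_Ioo (hnorm _), hF]
    exact (summable_pow_div_Gamma hα₀ hα₁ (by positivity) _).mul_left _
  have hint : ∀ k, IntegrableOn (F c k) (Ioo 0 t) := fun k =>
    (integrableOn_sub_rpow_mul_rpow_mul_pow hα₀ hβ ht c k).div_const _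
  rw [mittagLefflerR, ← tsum_mul_left]
  simp_rw [← hF c]
  rw [integral_tsum_of_summable_integral_norm hint hsum]
  congr 1 with s
  simp only [F, mittagLefflerR, ← tsum_mul_left, mul_div_assoc]

end RiemannLiouville

noncomputable def volterraKernel (α β t s : ℝ) : ℝ :=
  t ^ (1 - β) * ((t - s) ^ (α - 1) * s ^ (β - 1))

namespace volterraKernel

variable {α β s t : ℝ}

lemma nonneg (hs : 0 ≤ s) (hst : s ≤ t) : 0 ≤ volterraKernel α β t s := by
  unfold volterraKernel
  have := rpow_nonneg (hs.trans hst) (1 - β)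
  have := rpow_nonneg (sub_nonneg.2 hst) (α - 1)
  have := rpow_nonneg hs (β - 1)
  positivity

lemma antitone_left (hαβ : α ≤ β) (hβ : β ≤ 1) (hs : 0 < s) (hst : s < t) {t' : ℝ}
    (htt' : t ≤ t') : volterraKernel α β t' s ≤ volterraKernel α β t s := by
  -- `t ^ (1 - β) * (t - s) ^ (α - 1) = (t / (t - s)) ^ (1 - β) * (t - s) ^ (α - β)`,
  -- a product of two nonnegative factors that are antitone in `t`
  have hsplit : ∀ u, s < u → u ^ (1 - β) * (u - s) ^ (α - 1) =
      (u / (u - s)) ^ (1 - β) * (u - s) ^ (α - β) := fun u hu => by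
    have hus : 0 < u - s := sub_pos.2 hu
    rw [div_rpow (hs.trans hu).le hus.le, show α - 1 = (α - β) - (1 - β) by ring,
      rpow_sub hus]
    ring
  have hratio : t' / (t' - s) ≤ t / (t - s) := by
    rw [div_le_div_iff₀ (by linarith) (by linarith)]
    nlinarith
  unfold volterraKernel
  rw [← mul_assoc, ← mul_assoc, hsplit t hst, hsplit t' (hst.trans_le htt')]
  gcongr ?_ * _
  have ht's : 0 ≤ t' / (t' - s) := div_nonneg (by linarith) (by linarith)
  exact mul_le_mul (rpow_le_rpow ht's hratio (by linarith))
    (rpow_le_rpow_of_nonpos (by linarith) (by linarith) (by linarith))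
    (rpow_nonneg (by linarith) _) (rpow_nonneg (div_nonneg (by linarith) (by linarith)) _)

lemma integral_Ioo (hα : 0 < α) (hβ : 0 < β) (ht : 0 < t) :
    ∫ s in Ioo 0 t, volterraKernel α β t s = Gamma α * Gamma β / Gamma (α + β) * t ^ α := by
  simp only [volterraKernel]
  rw [integral_const_mul, integral_sub_rpow_mul_rpow hα hβ ht, mul_left_comm, ← rpow_add ht]
  ring_nf

lemma integrableOn (hα : 0 < α) (hβ : 0 < β) (ht : 0 < t) :
    IntegrableOn (volterraKernel α β t) (Ioo 0 t) :=
  (integrableOn_sub_rpow_mul_rpow hα hβ ht).const_mul _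

lemma integrableOn_mul (hα : 0 < α) (hβ : 0 < β) (ht : 0 < t) {σ : ℝ → ℝ}
    (hσ : Continuous σ) : IntegrableOn (fun s => volterraKernel α β t s * σ s) (Ioo 0 t) := by
  obtain ⟨C, hC⟩ := isCompact_Icc.exists_bound_of_continuousOn (hσ.continuousOn (s := Icc 0 t))
  refine (integrableOn hα hβ ht).mul_bdd (c := C) hσ.aestronglyMeasurable ?_
  filter_upwards [ae_restrict_mem measurableSet_Ioo] with s hs
  exact hC s (Ioo_subset_Icc_self hs)

lemma integral_Ioo_le (hα : 0 < α) (hβ : 0 ≤ β) {s₁ t₁ : ℝ} (hs₁ : 0 < s₁)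
    (hst : s₁ ≤ t₁) (ht₁ : t₁ ≤ 2 * s₁) :
    ∫ s in Ioo s₁ t₁, volterraKernel α β t₁ s ≤ 2 * ((t₁ - s₁) ^ α / α) := by
  have hpow : ∫ s in Ioo s₁ t₁, (t₁ - s) ^ (α - 1) = (t₁ - s₁) ^ α / α := by
    rw [← integral_Ioc_eq_integral_Ioo, ← intervalIntegral.integral_of_le hst,
      intervalIntegral.integral_comp_sub_left (fun u => u ^ (α - 1)), sub_self,
      integral_rpow (Or.inl (by linarith)), zero_rpow (by linarith), sub_add_cancel, sub_zero]
  have hpow_int : IntegrableOn (fun s => (t₁ - s) ^ (α - 1)) (Ioo s₁ t₁) := by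
    have h := (intervalIntegral.intervalIntegrable_rpow' (a := 0) (b := t₁ - s₁)
      (by linarith : -1 < α - 1)).comp_sub_left t₁
    rw [sub_zero, sub_sub_cancel] at h
    exact ((intervalIntegrable_iff_integrableOn_Ioc_of_le hst).1 h.symm).mono_set
      Ioo_subset_Ioc_self
  rw [← hpow, ← integral_const_mul]
  refine integral_mono_of_nonneg ?_ (hpow_int.const_mul 2) ?_
  · filter_upwards [ae_restrict_mem measurableSet_Ioo] with s hs
    exact nonneg (hs₁.le.trans hs.1.le) hs.2.le
  · filter_upwards [ae_restrict_mem measurableSet_Ioo] with s hs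
    have hs0 : 0 < s := hs₁.trans hs.1
    have hfactor : t₁ ^ (1 - β) * s ^ (β - 1) ≤ 2 := calc
      t₁ ^ (1 - β) * s ^ (β - 1) = (t₁ / s) ^ (1 - β) := by
        rw [div_rpow (by linarith) hs0.le, div_eq_mul_inv, ← rpow_neg hs0.le, neg_sub]
      _ ≤ (t₁ / s) ^ (1 : ℝ) :=
        rpow_le_rpow_of_exponent_le ((one_le_div hs0).2 (by linarith [hs.2])) (by linarith)
      _ ≤ 2 := by rw [rpow_one, div_le_iff₀ hs0]; linarith [hs.1]
    have := rpow_nonneg (sub_nonneg.2 hs.2.le) (α - 1)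
    calc volterraKernel α β t₁ s = t₁ ^ (1 - β) * s ^ (β - 1) * (t₁ - s) ^ (α - 1) := by
          unfold volterraKernel; ring
      _ ≤ 2 * (t₁ - s) ^ (α - 1) := by gcongr

end volterraKernel

lemma setIntegral_Ioo_add_Ioo {f : ℝ → ℝ} {a b c : ℝ} (hab : a ≤ b) (hbc : b ≤ c)
    (hf : IntegrableOn f (Ioo a c)) :
    (∫ x in Ioo a b, f x) + ∫ x in Ioo b c, f x = ∫ x in Ioo a c, f x := by
  have hf' : IntervalIntegrable f volume a c :=
    (intervalIntegrable_iff_integrableOn_Ioo_of_le (hab.trans hbc)).2 hf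
  simp only [← integral_Ioc_eq_integral_Ioo, ← intervalIntegral.integral_of_le, hab, hbc,
    hab.trans hbc]
  exact intervalIntegral.integral_add_adjacent_intervals
    (hf'.mono_set (uIcc_subset_uIcc left_mem_uIcc (mem_uIcc_of_le hab hbc)))
    (hf'.mono_set (uIcc_subset_uIcc (mem_uIcc_of_le hab hbc) right_mem_uIcc))

lemma exists_first_sign_change {σ : ℝ → ℝ} (hσ : Continuous σ) (h0 : 0 < σ 0)
    (hneg : ∃ b, 0 ≤ b ∧ σ b < 0) :
    ∃ τ > 0, (∀ x ∈ Ico 0 τ, 0 ≤ σ x) ∧ ∀ δ > 0, ∃ x ∈ Ico τ (τ + δ), σ x < 0 := by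
  set S := {x | 0 ≤ x ∧ σ x < 0}
  have hS : S.Nonempty := hneg
  have hSbdd : BddBelow S := ⟨0, fun x hx => hx.1⟩
  have hnonneg : ∀ x ∈ Ico 0 (sInf S), 0 ≤ σ x := fun x hx => by
    by_contra! h
    exact (csInf_le hSbdd ⟨hx.1, h⟩).not_gt hx.2
  have hfreq : ∀ δ > 0, ∃ x ∈ Ico (sInf S) (sInf S + δ), σ x < 0 := fun δ hδ => by
    obtain ⟨x, hxS, hx⟩ := (csInf_lt_iff hSbdd hS).1 (lt_add_of_pos_right (sInf S) hδ)
    exact ⟨x, ⟨csInf_le hSbdd hxS, hx⟩, hxS.2⟩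
  refine ⟨sInf S, ?_, hnonneg, hfreq⟩
  obtain ⟨ε, hε, hpos⟩ := Metric.eventually_nhds_iff.1 (hσ.continuousAt.eventually (lt_mem_nhds h0))
  obtain ⟨x, hx, hσx⟩ := hfreq ε hε
  refine (le_csInf hS fun x hx => hx.1).lt_of_ne fun hzero => ?_
  rw [← hzero, zero_add] at hx
  have : 0 < σ x := hpos (by rw [Real.dist_eq, sub_zero, abs_of_nonneg hx.1]; exact hx.2)
  linarith

lemma exists_sign_change_isMinOn {σ : ℝ → ℝ} (hσ : Continuous σ) (h0 : 0 < σ 0)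
    (hneg : ∃ b, 0 ≤ b ∧ σ b < 0) :
    ∃ τ > 0, ∀ δ > 0, ∃ s₁ t₁, τ ≤ s₁ ∧ s₁ < t₁ ∧ t₁ ≤ s₁ + δ ∧ 0 ≤ σ s₁ ∧ σ t₁ < 0 ∧
      (∀ s ∈ Ioo s₁ t₁, σ s < 0) ∧ IsMinOn σ (Icc 0 t₁) t₁ := by
  obtain ⟨τ, hτ, hnonneg, hfreq⟩ := exists_first_sign_change hσ h0 hneg
  refine ⟨τ, hτ, fun δ hδ => ?_⟩
  obtain ⟨t₁, ht₁, hmin⟩ := isCompact_Icc.exists_isMinOn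
    (nonempty_Icc.2 (by linarith : (0 : ℝ) ≤ τ + δ)) hσ.continuousOn
  obtain ⟨x, hx, hσx⟩ := hfreq δ hδ
  have hσt₁ : σ t₁ < 0 := (hmin ⟨hτ.le.trans hx.1, hx.2.le⟩).trans_lt hσx
  have hτt₁ : τ ≤ t₁ := not_lt.1 fun h => (hnonneg t₁ ⟨ht₁.1, h⟩).not_gt hσt₁
  set A := Icc 0 t₁ ∩ σ ⁻¹' Ici 0
  have hA : IsClosed A := isClosed_Icc.inter (isClosed_Ici.preimage hσ)
  have hAbdd : BddAbove A := ⟨t₁, fun x hx => hx.1.2⟩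
  have hτA : τ ∈ A := by
    have : Ico 0 τ ⊆ A := fun x hx => ⟨⟨hx.1, hx.2.le.trans hτt₁⟩, hnonneg x hx⟩
    exact hA.closure_subset_iff.2 this (closure_Ico hτ.ne ▸ right_mem_Icc.2 hτ.le)
  have hs₁A : sSup A ∈ A := hA.csSup_mem ⟨τ, hτA⟩ hAbdd
  have hτs₁ : τ ≤ sSup A := le_csSup hAbdd hτA
  refine ⟨sSup A, t₁, hτs₁, hs₁A.1.2.lt_of_ne ?_, by linarith [ht₁.2], hs₁A.2, hσt₁,
    fun s hs => ?_, hmin.on_subset (Icc_subset_Icc le_rfl ht₁.2)⟩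
  · rintro h
    exact (h ▸ hs₁A.2 : (0 : ℝ) ≤ σ t₁).not_gt hσt₁
  · by_contra! h
    exact (le_csSup hAbdd ⟨⟨(hτ.le.trans hτs₁).trans hs.1.le, hs.2.le⟩, h⟩).not_gt hs.1

section Volterra

variable {α β c C : ℝ} {σ : ℝ → ℝ}

lemma mul_setIntegral_volterraKernel_le_sub_of_isMinOn (hα : 0 < α) (hαβ : α ≤ β) (hβ : β ≤ 1)
    (hc : 0 ≤ c) (hσ : Continuous σ)
    (heq : ∀ t > 0, σ t = C - c * ∫ s in Ioo 0 t, volterraKernel α β t s * σ s)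
    {s₁ t₁ : ℝ} (hs₁ : 0 < s₁) (hst : s₁ < t₁) (hσt₁ : σ t₁ < 0)
    (hneg : ∀ s ∈ Ioo s₁ t₁, σ s < 0) (hmin : IsMinOn σ (Icc 0 t₁) t₁) :
    c * (σ t₁ * ∫ s in Ioo s₁ t₁, volterraKernel α β t₁ s) ≤ σ t₁ - σ s₁ := by
  have hβ₀ : 0 < β := hα.trans_le hαβ
  have ht₁ : 0 < t₁ := hs₁.trans hst
  set K := volterraKernel α β
  set m := σ t₁
  have hKt₁ : IntegrableOn (K t₁) (Ioo 0 s₁) :=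
    (volterraKernel.integrableOn hα hβ₀ ht₁).mono_set (Ioo_subset_Ioo_right hst.le)
  have hKσt₁ : IntegrableOn (fun s => K t₁ s * σ s) (Ioo 0 t₁) :=
    volterraKernel.integrableOn_mul hα hβ₀ ht₁ hσ
  have hleft : m * ((∫ s in Ioo 0 s₁, K s₁ s) - ∫ s in Ioo 0 s₁, K t₁ s) ≤
      (∫ s in Ioo 0 s₁, K s₁ s * σ s) - ∫ s in Ioo 0 s₁, K t₁ s * σ s := by
    rw [← integral_sub (volterraKernel.integrableOn hα hβ₀ hs₁) hKt₁, ← integral_const_mul,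
      ← integral_sub (volterraKernel.integrableOn_mul hα hβ₀ hs₁ hσ)
        (hKσt₁.mono_set (Ioo_subset_Ioo_right hst.le))]
    refine setIntegral_mono_on (((volterraKernel.integrableOn hα hβ₀ hs₁).sub hKt₁).const_mul m)
      ((volterraKernel.integrableOn_mul hα hβ₀ hs₁ hσ).sub
        (hKσt₁.mono_set (Ioo_subset_Ioo_right hst.le))) measurableSet_Ioo fun s hs => ?_
    have hK : K t₁ s ≤ K s₁ s := volterraKernel.antitone_left hαβ hβ hs.1 hs.2 hst.le
    have hσs : m ≤ σ s := hmin ⟨hs.1.le, hs.2.le.trans hst.le⟩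
    nlinarith
  have hright : ∫ s in Ioo s₁ t₁, K t₁ s * σ s ≤ 0 :=
    setIntegral_nonpos measurableSet_Ioo fun s hs =>
      mul_nonpos_of_nonneg_of_nonpos (volterraKernel.nonneg (hs₁.trans hs.1).le hs.2.le)
        (hneg s hs).le
  have hmass : (∫ s in Ioo 0 s₁, K s₁ s) - ∫ s in Ioo 0 s₁, K t₁ s ≤
      ∫ s in Ioo s₁ t₁, K t₁ s := by
    have hsplit := setIntegral_Ioo_add_Ioo hs₁.le hst.le (volterraKernel.integrableOn hα hβ₀ ht₁)
    rw [volterraKernel.integral_Ioo hα hβ₀ ht₁] at hsplit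
    rw [volterraKernel.integral_Ioo hα hβ₀ hs₁]
    have : 0 ≤ Gamma α * Gamma β / Gamma (α + β) := by
      have := Gamma_pos_of_pos hα; have := Gamma_pos_of_pos hβ₀
      have := Gamma_pos_of_pos (add_pos hα hβ₀); positivity
    have := mul_le_mul_of_nonneg_left (rpow_le_rpow hs₁.le hst.le hα.le) this
    linarith
  have hdiff : m - σ s₁ = c * (((∫ s in Ioo 0 s₁, K s₁ s * σ s) -
      ∫ s in Ioo 0 s₁, K t₁ s * σ s) - ∫ s in Ioo s₁ t₁, K t₁ s * σ s) := by
    have ht₁eq := heq t₁ ht₁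
    rw [← setIntegral_Ioo_add_Ioo hs₁.le hst.le hKσt₁] at ht₁eq
    linear_combination ht₁eq - heq s₁ hs₁
  rw [hdiff]
  refine mul_le_mul_of_nonneg_left ?_ hc
  nlinarith

theorem nonneg_of_eq_sub_integral_volterraKernel (hα : 0 < α) (hαβ : α ≤ β) (hβ : β ≤ 1)
    (hc : 0 < c) (hσ : Continuous σ) (h0 : 0 < σ 0)
    (heq : ∀ t > 0, σ t = C - c * ∫ s in Ioo 0 t, volterraKernel α β t s * σ s)
    {t : ℝ} (ht : 0 ≤ t) : 0 ≤ σ t := by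
  by_contra! hneg
  obtain ⟨τ, hτ, hcross⟩ := exists_sign_change_isMinOn hσ h0 ⟨t, ht, hneg⟩
  -- a window of length `δ` carries kernel mass at most `2 δ ^ α / α ≤ 1 / (2 c)`
  set δ := min τ ((α / (4 * c)) ^ α⁻¹)
  have hδ : 0 < δ := lt_min hτ (rpow_pos_of_pos (by positivity) _)
  obtain ⟨s₁, t₁, hτs₁, hst, ht₁, hσs₁, hσt₁, hneg, hmin⟩ := hcross δ hδ
  have hs₁ : 0 < s₁ := hτ.trans_le hτs₁
  have hstep := mul_setIntegral_volterraKernel_le_sub_of_isMinOn hα hαβ hβ hc.le hσ heq hs₁ hst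
    hσt₁ hneg hmin
  have hmass := volterraKernel.integral_Ioo_le (β := β) hα (hα.le.trans hαβ) hs₁ hst.le
    (by linarith [min_le_left τ ((α / (4 * c)) ^ α⁻¹)])
  have hwindow : (t₁ - s₁) ^ α ≤ α / (4 * c) := calc
    (t₁ - s₁) ^ α ≤ ((α / (4 * c)) ^ α⁻¹) ^ α :=
      rpow_le_rpow (by linarith) (by linarith [min_le_right τ ((α / (4 * c)) ^ α⁻¹)]) hα.le
    _ = α / (4 * c) := rpow_inv_rpow (by positivity) hα.ne'
  have hsmall : c * ∫ s in Ioo s₁ t₁, volterraKernel α β t₁ s ≤ 1 / 2 := calc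
    _ ≤ c * (2 * ((t₁ - s₁) ^ α / α)) := mul_le_mul_of_nonneg_left hmass hc.le
    _ ≤ c * (2 * (α / (4 * c) / α)) := by gcongr
    _ = 1 / 2 := by field_simp; ring
  nlinarith

end Volterra

section Nonneg

variable {α β : ℝ}

lemma mittagLefflerR_neg_rpow_eq (hα₀ : 0 < α) (hα₁ : α < 1) (hβ : 0 < β) {t : ℝ} (ht : 0 < t) :
    mittagLefflerR α β (-t ^ α) = 1 / Gamma β -
      1 / Gamma α * ∫ s in Ioo 0 t, volterraKernel α β t s * mittagLefflerR α β (-s ^ α) := by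
  have hRL := integral_sub_rpow_mul_rpow_mul_mittagLefflerR hα₀ hα₁ hβ ht (-1)
  simp only [neg_one_mul] at hRL
  simp only [volterraKernel, mul_assoc]
  rw [integral_const_mul]
  simp only [← mul_assoc, hRL, mittagLefflerR_eq_add_mul hα₀ hα₁ hβ (-t ^ α)]
  have : t ^ (1 - β) * t ^ (α + β - 1) = t ^ α := by rw [← rpow_add ht]; ring_nf
  field_simp [(Gamma_pos_of_pos hα₀).ne']
  linear_combination Gamma β * mittagLefflerR α (β + α) (-t ^ α) * this

theorem mittagLefflerR_nonneg_of_nonpos (hα₀ : 0 < α) (hα₁ : α < 1) (hαβ : α ≤ β) (hβ : β ≤ 1)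
    {w : ℝ} (hw : w ≤ 0) : 0 ≤ mittagLefflerR α β w := by
  have hβ₀ : 0 < β := hα₀.trans_le hαβ
  have h0 : 0 < mittagLefflerR α β (-0 ^ α) := by
    rw [zero_rpow hα₀.ne', neg_zero, mittagLefflerR_zero]
    exact one_div_pos.2 (Gamma_pos_of_pos hβ₀)
  have := nonneg_of_eq_sub_integral_volterraKernel (σ := fun t => mittagLefflerR α β (-t ^ α))
    hα₀ hαβ hβ (one_div_pos.2 (Gamma_pos_of_pos hα₀))
    ((continuous_mittagLefflerR hα₀ hα₁ hβ₀).comp (continuous_rpow_const hα₀.le).neg) h0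
    (fun t ht => mittagLefflerR_neg_rpow_eq hα₀ hα₁ hβ₀ ht) (rpow_nonneg (neg_nonneg.2 hw) α⁻¹)
  rwa [rpow_inv_rpow (neg_nonneg.2 hw) hα₀.ne', neg_neg] at this

lemma mittagLefflerR_add_nonneg_of_nonpos (hα₀ : 0 < α) (hα₁ : α < 1) (hαβ : α ≤ β)
    (hβ : β ≤ 1) {w : ℝ} (hw : w ≤ 0) : 0 ≤ mittagLefflerR α (β + α) w := by
  have hβ₀ : 0 < β := hα₀.trans_le hαβ
  rcases hw.eq_or_lt with rfl | hw
  · rw [mittagLefflerR_zero]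
    exact (one_div_pos.2 (Gamma_pos_of_pos (add_pos hβ₀ hα₀))).le
  -- `E_{α,β+α}` is a Riemann–Liouville integral of `E_{α,β}`, nonnegative on `(-∞, 0]`
  set t := (-w) ^ α⁻¹
  have ht : 0 < t := rpow_pos_of_pos (neg_pos.2 hw) _
  have hRL := integral_sub_rpow_mul_rpow_mul_mittagLefflerR hα₀ hα₁ hβ₀ ht (-1)
  simp only [neg_one_mul] at hRL
  rw [rpow_inv_rpow (neg_pos.2 hw).le hα₀.ne', neg_neg] at hRL
  have hint : 0 ≤ ∫ s in Ioo 0 t,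
      (t - s) ^ (α - 1) * s ^ (β - 1) * mittagLefflerR α β (-s ^ α) :=
    setIntegral_nonneg measurableSet_Ioo fun s hs =>
      mul_nonneg (mul_nonneg (rpow_nonneg (sub_nonneg.2 hs.2.le) _) (rpow_nonneg hs.1.le _))
        (mittagLefflerR_nonneg_of_nonpos hα₀ hα₁ hαβ hβ
          (neg_nonpos.2 (rpow_nonneg hs.1.le α)))
  rw [hRL] at hint
  have : 0 < Gamma α * t ^ (α + β - 1) := mul_pos (Gamma_pos_of_pos hα₀) (rpow_pos_of_pos ht _)
  exact nonneg_of_mul_nonneg_right (by linarith) this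

theorem mittagLefflerR_le_of_nonpos (hα₀ : 0 < α) (hα₁ : α < 1) (hαβ : α ≤ β) (hβ : β ≤ 1)
    {w : ℝ} (hw : w ≤ 0) : mittagLefflerR α β w ≤ 1 / Gamma β := by
  rw [mittagLefflerR_eq_add_mul hα₀ hα₁ (hα₀.trans_le hαβ)]
  linarith [mul_nonpos_of_nonpos_of_nonneg hw
    (mittagLefflerR_add_nonneg_of_nonpos hα₀ hα₁ hαβ hβ hw)]

end Nonneg

theorem mittagLeffler_le_of_nonpos (α β : ℝ) (hα : α ∈ Set.Ioo (0 : ℝ) 1)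
    (hβ : β ∈ Set.Ioc (0 : ℝ) 1) (hβα : α ≤ β) :
    (∀ w : ℝ, w ≤ 0 → mittagLefflerR α β w ≤ 1 / Real.Gamma β) ∧
      (∀ w : ℝ, w ≤ 0 → mittagLefflerR α 1 w ≤ 1) := by
  obtain ⟨hα₀, hα₁⟩ := hα
  refine ⟨fun w hw => mittagLefflerR_le_of_nonpos hα₀ hα₁ hβα hβ.2 hw, fun w hw => ?_⟩
  simpa using mittagLefflerR_le_of_nonpos hα₀ hα₁ hα₁.le le_rfl hw
end
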